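/- arXiv:1005.4049 — 5 statements merged into one kernel-verified Lean document; each statement's English description precedes it below -/
import Mathlib

section
/- Let k ≥ 1, let Q1 and Q2 be positive definite integral quadratic forms in k variables, let 0 < λ < 1, and let 1 ≤ p, q < ∞. If there exists a constant A such that ‖J_{Q1,Q2,λ} f‖_{ℓ^q} ≤ A ‖f‖_{ℓ^p} for every finitely supported f : ℤ^k × ℤ → ℂ, then 1/q ≤ 1/p − (k/(k+2))(1−λ). -/
/-!
Test the bound on the indicator `f` of the box `[-N, N]^k × [-C N², C N²]`. For every point
`(n, t)` of `[1, N]^k × [1, N²]` (there are `N^(k+2)` of them) and every `m ∈ [1, N]^k`, the point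
`(n - m, t - Q₁ m)` lies in the box, and `Q₂ m ≤ c N²`; so `|J f| ≳ N^k · N^(-kλ)` there. Comparing
`‖J f‖_q ≳ N^(k(1-λ)) · N^((k+2)/q)` with `‖f‖_p ≲ N^((k+2)/p)` and letting `N → ∞` gives the
inequality between the exponents.
-/

open Matrix MeasureTheory
open scoped NNReal ENNReal

noncomputable section

open Finset Filter

lemma Matrix.abs_dotProduct_mulVec_le {ι R : Type*} [Fintype ι] [CommRing R] [LinearOrder R]
    [IsStrictOrderedRing R] (A : Matrix ι ι R) {x : ι → R} {N : R} (hx : ∀ i, |x i| ≤ N) :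
    |x ⬝ᵥ A *ᵥ x| ≤ (∑ i, ∑ j, |A i j|) * N ^ 2 := by
  have hterm (i j : ι) : |x i * (A i j * x j)| ≤ |A i j| * N ^ 2 := by
    have hN : 0 ≤ N := (abs_nonneg _).trans (hx i)
    rw [abs_mul, abs_mul, mul_left_comm, sq]
    exact mul_le_mul_of_nonneg_left (mul_le_mul (hx i) (hx j) (abs_nonneg _) hN) (abs_nonneg _)
  calc |x ⬝ᵥ A *ᵥ x| = |∑ i, ∑ j, x i * (A i j * x j)| := by
        simp only [dotProduct, mulVec, mul_sum]
    _ ≤ ∑ i, ∑ j, |x i * (A i j * x j)| :=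
        (abs_sum_le_sum_abs _ _).trans (sum_le_sum fun i _ => abs_sum_le_sum_abs _ _)
    _ ≤ ∑ i, ∑ j, |A i j| * N ^ 2 := sum_le_sum fun i _ => sum_le_sum fun j _ => hterm i j
    _ = (∑ i, ∑ j, |A i j|) * N ^ 2 := by simp only [sum_mul]

lemma Matrix.PosDef.intCast_dotProduct_mulVec_pos {ι : Type*} [Fintype ι] {A : Matrix ι ι ℤ}
    (hA : (A.map ((↑) : ℤ → ℝ)).PosDef) {x : ι → ℤ} (hx : x ≠ 0) : 0 < x ⬝ᵥ A *ᵥ x := by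
  have hx' : ((↑) ∘ x : ι → ℝ) ≠ 0 := fun h =>
    hx (funext fun i => by simpa using congrFun h i)
  have := hA.dotProduct_mulVec_pos hx'
  rw [star_trivial] at this
  have h : (((x ⬝ᵥ A *ᵥ x : ℤ)) : ℝ) = ((↑) ∘ x) ⬝ᵥ (A.map (↑)) *ᵥ ((↑) ∘ x) := by
    simp [dotProduct, mulVec]
  exact_mod_cast h ▸ this

lemma le_of_forall_mul_rpow_le {a b α β : ℝ} (ha : 0 < a)
    (h : ∀ N : ℕ, 1 ≤ N → a * (N : ℝ) ^ α ≤ b * (N : ℝ) ^ β) : α ≤ β := by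
  by_contra! hβα
  have hlim : Tendsto (fun N : ℕ => (N : ℝ) ^ (α - β)) atTop atTop :=
    (tendsto_rpow_atTop (sub_pos.2 hβα)).comp tendsto_natCast_atTop_atTop
  obtain ⟨N, hN, hN1⟩ := ((hlim.eventually_gt_atTop (b / a)).and (eventually_ge_atTop 1)).exists
  have hN0 : (0 : ℝ) < N := by exact_mod_cast hN1
  rw [Real.rpow_sub hN0, div_lt_div_iff₀ ha (by positivity)] at hN
  linarith [h N hN1]

lemma abs_le_of_two_mul_eq_dotProduct_mulVec {ι : Type*} [Fintype ι] {A : Matrix ι ι ℤ}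
    {Q : (ι → ℤ) → ℤ} (hQ : ∀ x, 2 * Q x = x ⬝ᵥ A *ᵥ x) (x : ι → ℤ) (N : ℤ)
    (hx : ∀ i, |x i| ≤ N) : |Q x| ≤ (∑ i, ∑ j, |A i j|) * N ^ 2 := by
  have h := A.abs_dotProduct_mulVec_le hx
  rw [← hQ, abs_mul, abs_two] at h
  linarith [abs_nonneg (Q x)]

lemma pos_of_two_mul_eq_dotProduct_mulVec {ι : Type*} [Fintype ι] {A : Matrix ι ι ℤ}
    (hA : (A.map ((↑) : ℤ → ℝ)).PosDef) {Q : (ι → ℤ) → ℤ} (hQ : ∀ x, 2 * Q x = x ⬝ᵥ A *ᵥ x)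
    {x : ι → ℤ} (hx : x ≠ 0) : 0 < Q x := by
  have h := hA.intCast_dotProduct_mulVec_pos hx
  rw [← hQ] at h
  omega

lemma mul_card_rpow_le_of_eLpNorm_indicator_le {α E : Type*} [MeasurableSpace α]
    [MeasurableSingletonClass α] [NormedAddCommGroup E] {p q : ℝ} (hp : 0 < p) (hq : 0 < q)
    {g : α → E} {F G : Finset α} {δ : ℝ} (hδ : 0 ≤ δ) (hg : ∀ x ∈ G, δ ≤ ‖g x‖) {A : ℝ≥0}
    (h : eLpNorm g (.ofReal q) Measure.count
      ≤ A * eLpNorm ((F : Set α).indicator (1 : α → ℂ)) (.ofReal p) Measure.count) :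
    δ * (#G : ℝ) ^ (1 / q) ≤ A * (#F : ℝ) ^ (1 / p) := by
  have hG : eLpNorm ((G : Set α).indicator fun _ => δ) (.ofReal q) Measure.count
      ≤ eLpNorm g (.ofReal q) Measure.count := by
    refine eLpNorm_mono_enorm fun x => ?_
    by_cases hx : x ∈ G
    · simpa [hx, ← ofReal_norm, abs_of_nonneg hδ] using hg x hx
    · simp [hx]
  rw [eLpNorm_indicator_const G.measurableSet (by simp [hq]) (by simp),
    Measure.count_apply_finset, ENNReal.toReal_ofReal hq.le, Real.enorm_of_nonneg hδ] at hG
  have hF := eLpNorm_indicator_const_le (μ := Measure.count) (s := (F : Set α)) (1 : ℂ) (.ofReal p)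
  rw [Measure.count_apply_finset, ENNReal.toReal_ofReal hp.le, enorm_one, one_mul] at hF
  rw [← ENNReal.ofReal_le_ofReal_iff (by positivity), ENNReal.ofReal_mul hδ,
    ENNReal.ofReal_mul A.coe_nonneg, ← ENNReal.ofReal_rpow_of_nonneg (by positivity) (by positivity),
    ← ENNReal.ofReal_rpow_of_nonneg (by positivity) (by positivity)]
  simpa using hG.trans (h.trans (mul_le_mul_right hF _))

section FracRadon

variable {ι : Type*} [DecidableEq (ι → ℤ)]

/-- `J_{Q₁,Q₂,λ}` with `s = kλ/2`. -/
def fracRadon (Q₁ Q₂ : (ι → ℤ) → ℤ) (s : ℝ) (f : (ι → ℤ) × ℤ → ℂ) (x : (ι → ℤ) × ℤ) : ℂ :=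
  ∑' m : ι → ℤ, if m = 0 then 0 else f (x.1 - m, x.2 - Q₁ m) / Complex.ofReal ((Q₂ m : ℝ) ^ s)

lemma sum_inv_rpow_le_norm_fracRadon_indicator {Q₁ Q₂ : (ι → ℤ) → ℤ} {s : ℝ}
    (hQ₂ : ∀ m ≠ 0, 0 < Q₂ m) (F : Finset ((ι → ℤ) × ℤ)) (x : (ι → ℤ) × ℤ)
    {S : Finset (ι → ℤ)} (hS : 0 ∉ S) (hSF : ∀ m ∈ S, (x.1 - m, x.2 - Q₁ m) ∈ F) :
    ∑ m ∈ S, ((Q₂ m : ℝ) ^ s)⁻¹ ≤ ‖fracRadon Q₁ Q₂ s ((F : Set _).indicator 1) x‖ := by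
  set r : (ι → ℤ) → ℝ := fun m => if m = 0 then 0 else
    (F : Set _).indicator 1 (x.1 - m, x.2 - Q₁ m) / (Q₂ m : ℝ) ^ s
  have hr : fracRadon Q₁ Q₂ s ((F : Set _).indicator 1) x = ∑' m, (r m : ℂ) := by
    refine tsum_congr fun m => ?_
    by_cases hm : m = 0
    · simp [r, hm]
    · by_cases hmF : (x.1 - m, x.2 - Q₁ m) ∈ F <;> simp [r, hm, hmF]
  have hr0 (m) : 0 ≤ r m := by
    by_cases hm : m = 0
    · simp [r, hm]
    · simp only [r, hm, if_false]
      exact div_nonneg (Set.indicator_nonneg (fun _ _ => zero_le_one) _)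
        (Real.rpow_nonneg (Int.cast_nonneg (hQ₂ m hm).le) _)
  have hr_summable : Summable r := by
    have hinj : Function.Injective fun m => (x.1 - m, x.2 - Q₁ m) := fun m m' h => by
      simpa using congrArg Prod.fst h
    refine summable_of_hasFiniteSupport
      ((F.finite_toSet.preimage hinj.injOn).subset fun m hm => ?_)
    show (x.1 - m, x.2 - Q₁ m) ∈ (F : Set _)
    by_contra hmF
    simp [r, Set.indicator_of_notMem hmF] at hm
  calc ∑ m ∈ S, ((Q₂ m : ℝ) ^ s)⁻¹ = ∑ m ∈ S, r m :=
        Finset.sum_congr rfl fun m hm => by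
          simp [r, ne_of_mem_of_not_mem hm hS, hSF m hm]
    _ ≤ ∑' m, r m := hr_summable.sum_le_tsum S fun m _ => hr0 m
    _ = ‖fracRadon Q₁ Q₂ s ((F : Set _).indicator 1) x‖ := by
        rw [hr, ← Complex.ofReal_tsum, Complex.norm_real, Real.norm_of_nonneg (tsum_nonneg hr0)]

end FracRadon

lemma nonneg_of_forall_abs_le_mul_sq {ι : Type*} {Q : (ι → ℤ) → ℤ} {c : ℤ}
    (hQ : ∀ x N, (∀ i, |x i| ≤ N) → |Q x| ≤ c * N ^ 2) : 0 ≤ c := by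
  simpa using (abs_nonneg _).trans (hQ 0 1 (by simp))

section BoxTest

variable {ι : Type*} [Fintype ι] [DecidableEq ι]

variable (ι) in
abbrev cube (a b : ℤ) : Finset (ι → ℤ) := Icc (fun _ => a) (fun _ => b)

lemma abs_le_of_mem_cube_one {N : ℤ} {m : ι → ℤ} (hm : m ∈ cube ι 1 N) (i : ι) : |m i| ≤ N := by
  rw [mem_Icc] at hm
  exact abs_le.2 ⟨by linarith [hm.1 i, hm.2 i], hm.2 i⟩

lemma card_cube (a b : ℤ) : #(cube ι a b) = (b + 1 - a).toNat ^ Fintype.card ι := by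
  simp [Pi.card_Icc, Int.card_Icc]

lemma card_cube_one_prod_Icc_one (N : ℕ) :
    #(cube ι 1 N ×ˢ Icc 1 ((N : ℤ) ^ 2)) = N ^ (Fintype.card ι + 2) := by
  rw [card_product, card_cube, Int.card_Icc, add_sub_cancel_right, add_sub_cancel_right,
    ← Nat.cast_pow, Int.toNat_natCast, Int.toNat_natCast, pow_add]

lemma card_cube_prod_Icc_le {c : ℤ} (hc : 0 ≤ c) {N : ℕ} (hN : 1 ≤ N) :
    (#(cube ι (-N) N ×ˢ Icc (-((c + 1) * (N : ℤ) ^ 2)) ((c + 1) * (N : ℤ) ^ 2)) : ℝ)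
      ≤ 3 ^ (Fintype.card ι + 1) * (c + 1) * (N : ℝ) ^ (Fintype.card ι + 2) := by
  set d := Fintype.card ι
  have hcard : (#(cube ι (-N) N ×ˢ Icc (-((c + 1) * (N : ℤ) ^ 2)) ((c + 1) * (N : ℤ) ^ 2)) : ℤ)
      = (2 * N + 1) ^ d * (2 * (c + 1) * N ^ 2 + 1) := by
    rw [card_product, card_cube, Int.card_Icc, Nat.cast_mul, Nat.cast_pow,
      Int.toNat_of_nonneg (by omega), Int.toNat_of_nonneg (by nlinarith [sq_nonneg (N : ℤ)])]
    ring
  have hN1 : (1 : ℝ) ≤ N := by exact_mod_cast hN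
  have hc' : (0 : ℝ) ≤ c := by exact_mod_cast hc
  calc _ = ((2 * N + 1) ^ d * (2 * (c + 1) * N ^ 2 + 1) : ℝ) := by exact_mod_cast hcard
    _ ≤ (3 * N) ^ d * (3 * (c + 1) * N ^ 2) := by gcongr <;> nlinarith
    _ = 3 ^ (d + 1) * (c + 1) * N ^ (d + 2) := by ring

variable {Q₁ Q₂ : (ι → ℤ) → ℤ} {c₁ c₂ : ℤ}
  (hQ₁ : ∀ x N, (∀ i, |x i| ≤ N) → |Q₁ x| ≤ c₁ * N ^ 2)
  (hQ₂ : ∀ x N, (∀ i, |x i| ≤ N) → |Q₂ x| ≤ c₂ * N ^ 2) (hQ₂pos : ∀ m ≠ 0, 0 < Q₂ m)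

include hQ₁ in
lemma sub_mem_box_of_mem_cube (N : ℤ) {n m : ι → ℤ} {t : ℤ} (hn : n ∈ cube ι 1 N)
    (ht : t ∈ Icc 1 (N ^ 2)) (hm : m ∈ cube ι 1 N) :
    (n - m, t - Q₁ m) ∈ cube ι (-N) N ×ˢ Icc (-((c₁ + 1) * N ^ 2)) ((c₁ + 1) * N ^ 2) := by
  have hQ := abs_le.1 (hQ₁ m N (abs_le_of_mem_cube_one hm))
  simp only [mem_Icc, Pi.le_def] at hn hm ht
  simp only [mem_product, mem_Icc, Pi.le_def, Pi.sub_apply]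
  refine ⟨⟨fun i => ?_, fun i => ?_⟩, ?_, ?_⟩
  · linarith [hn.1 i, hm.2 i]
  · linarith [hn.2 i, hm.1 i]
  · linarith
  · linarith

include hQ₁ hQ₂ hQ₂pos

lemma pow_div_rpow_le_norm_fracRadon_indicator [Nonempty ι] {s : ℝ} (hs : 0 ≤ s) (N : ℕ)
    {x : (ι → ℤ) × ℤ} (hx : x ∈ cube ι 1 N ×ˢ Icc 1 ((N : ℤ) ^ 2)) :
    (N : ℝ) ^ Fintype.card ι / (c₂ * (N : ℝ) ^ 2) ^ s ≤ ‖fracRadon Q₁ Q₂ s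
      (((cube ι (-N) N ×ˢ Icc (-((c₁ + 1) * (N : ℤ) ^ 2)) ((c₁ + 1) * (N : ℤ) ^ 2) :
        Finset _) : Set _).indicator 1) x‖ := by
  have hS0 : (0 : ι → ℤ) ∉ cube ι 1 N := fun h => by
    simpa using (mem_Icc.1 h).1 (Classical.arbitrary ι)
  rw [mem_product] at hx
  refine le_trans ?_ (sum_inv_rpow_le_norm_fracRadon_indicator hQ₂pos _ x hS0
    fun m hm => sub_mem_box_of_mem_cube hQ₁ N hx.1 hx.2 hm)
  calc (N : ℝ) ^ Fintype.card ι / (c₂ * (N : ℝ) ^ 2) ^ s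
      = ∑ m ∈ cube ι 1 N, ((c₂ * (N : ℝ) ^ 2) ^ s)⁻¹ := by
        simp [card_cube, div_eq_mul_inv]
    _ ≤ ∑ m ∈ cube ι 1 N, ((Q₂ m : ℝ) ^ s)⁻¹ := sum_le_sum fun m hm => by
        have hQ₂m : (0 : ℝ) < Q₂ m := by exact_mod_cast hQ₂pos m (ne_of_mem_of_not_mem hm hS0)
        have hQ₂N : (Q₂ m : ℝ) ≤ c₂ * (N : ℝ) ^ 2 := by
          exact_mod_cast (le_abs_self _).trans (hQ₂ m N (abs_le_of_mem_cube_one hm))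
        exact inv_anti₀ (by positivity) (Real.rpow_le_rpow hQ₂m.le hQ₂N hs)

lemma pow_div_rpow_mul_rpow_le_of_fracRadon_bounded [Nonempty ι] {s p q : ℝ} (hs : 0 ≤ s)
    (hp : 0 < p) (hq : 0 < q) {A : ℝ≥0} (hA : ∀ f, (Function.support f).Finite →
      eLpNorm (fracRadon Q₁ Q₂ s f) (.ofReal q) Measure.count
        ≤ A * eLpNorm f (.ofReal p) Measure.count) {N : ℕ} (hN : 1 ≤ N) :
    (N : ℝ) ^ Fintype.card ι / (c₂ * (N : ℝ) ^ 2) ^ s * ((N : ℝ) ^ (Fintype.card ι + 2)) ^ (1 / q)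
      ≤ A * (3 ^ (Fintype.card ι + 1) * (c₁ + 1) * (N : ℝ) ^ (Fintype.card ι + 2)) ^ (1 / p) := by
  have hc₂N : (0 : ℝ) ≤ c₂ * (N : ℝ) ^ 2 := by
    have := nonneg_of_forall_abs_le_mul_sq hQ₂
    positivity
  have key := mul_card_rpow_le_of_eLpNorm_indicator_le hp hq
    (div_nonneg (by positivity) (Real.rpow_nonneg hc₂N _))
    (fun _ => pow_div_rpow_le_norm_fracRadon_indicator hQ₁ hQ₂ hQ₂pos hs N)
    (hA _ (Finset.finite_toSet _ |>.subset Set.support_indicator_subset))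
  rw [card_cube_one_prod_Icc_one, Nat.cast_pow] at key
  exact key.trans (by gcongr; exact card_cube_prod_Icc_le (nonneg_of_forall_abs_le_mul_sq hQ₁) hN)

lemma exponent_le_of_fracRadon_bounded [Nonempty ι] {s p q : ℝ} (hs : 0 ≤ s)
    (hp : 0 < p) (hq : 0 < q) (hbound : ∃ A : ℝ≥0, ∀ f, (Function.support f).Finite →
      eLpNorm (fracRadon Q₁ Q₂ s f) (.ofReal q) Measure.count
        ≤ A * eLpNorm f (.ofReal p) Measure.count) :
    (Fintype.card ι : ℝ) - 2 * s + (Fintype.card ι + 2) / q ≤ (Fintype.card ι + 2) / p := by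
  obtain ⟨A, hA⟩ := hbound
  set d := Fintype.card ι
  have hc₂ : (0 : ℝ) < c₂ := by
    obtain ⟨i⟩ := ‹Nonempty ι›
    have hpos := hQ₂pos (Pi.single i 1) (by simp)
    have hle := hQ₂ (Pi.single i 1) 1 fun j => by
      rcases eq_or_ne j i with rfl | hj <;> simp [*]
    exact_mod_cast hpos.trans_le ((le_abs_self _).trans (by simpa using hle))
  have hc₁ : (0 : ℝ) ≤ c₁ := Int.cast_nonneg (nonneg_of_forall_abs_le_mul_sq hQ₁)
  refine le_of_forall_mul_rpow_le (a := (c₂ ^ s)⁻¹) (b := A * (3 ^ (d + 1) * (c₁ + 1)) ^ (1 / p))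
    (by positivity) fun N hN => ?_
  have hN0 : (0 : ℝ) < N := by exact_mod_cast hN
  convert pow_div_rpow_mul_rpow_le_of_fracRadon_bounded hQ₁ hQ₂ hQ₂pos hs hp hq hA hN using 1
  · rw [Real.mul_rpow hc₂.le (by positivity), ← Real.rpow_natCast _ 2, ← Real.rpow_mul hN0.le,
      ← Real.rpow_natCast _ (d + 2), ← Real.rpow_mul hN0.le, ← Real.rpow_natCast _ d,
      Real.rpow_add hN0, Real.rpow_sub hN0]
    push_cast
    field_simp
  · rw [← Real.rpow_natCast _ (d + 2), Real.mul_rpow (x := 3 ^ (d + 1) * (c₁ + 1))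
      (by positivity) (by positivity), ← Real.rpow_mul hN0.le]
    push_cast
    ring_nf

end BoxTest

theorem discrete_fractional_radon_necessary_i_general
    (k : ℕ) (hk : 1 ≤ k)
    (A₁ A₂ : Matrix (Fin k) (Fin k) ℤ)
    (hA₂pos : (A₂.map ((↑) : ℤ → ℝ)).PosDef)
    (Q₁ Q₂ : (Fin k → ℤ) → ℤ)
    (hQ₁ : ∀ x, 2 * Q₁ x = x ⬝ᵥ A₁.mulVec x)
    (hQ₂ : ∀ x, 2 * Q₂ x = x ⬝ᵥ A₂.mulVec x)
    (lam : ℝ) (hlam₀ : 0 < lam)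
    (p q : ℝ) (hp₁ : 1 ≤ p) (hq₁ : 1 ≤ q)
    (hbound : ∃ A : ℝ≥0, ∀ f : ((Fin k → ℤ) × ℤ) → ℂ, (Function.support f).Finite →
      eLpNorm
        (fun nt : (Fin k → ℤ) × ℤ =>
          ∑' m : Fin k → ℤ,
            if m = 0 then 0
            else f (nt.1 - m, nt.2 - Q₁ m) /
              Complex.ofReal ((Q₂ m : ℝ) ^ ((k : ℝ) * lam / 2)))
        (ENNReal.ofReal q) Measure.count
      ≤ (A : ℝ≥0∞) * eLpNorm f (ENNReal.ofReal p) Measure.count) :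
    1 / q ≤ 1 / p - (k : ℝ) / (k + 2) * (1 - lam) := by
  have : Nonempty (Fin k) := ⟨⟨0, hk⟩⟩
  have h := exponent_le_of_fracRadon_bounded (abs_le_of_two_mul_eq_dotProduct_mulVec hQ₁)
    (abs_le_of_two_mul_eq_dotProduct_mulVec hQ₂)
    (fun _ => pos_of_two_mul_eq_dotProduct_mulVec hA₂pos hQ₂) (by positivity)
    (by linarith) (by linarith) hbound
  rw [Fintype.card_fin] at h
  have hk2 : (0 : ℝ) < k + 2 := by positivity
  refine le_of_mul_le_mul_left ?_ hk2
  rw [mul_sub, ← mul_assoc, mul_div_cancel₀ _ hk2.ne', mul_one_div, mul_one_div]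
  linarith

/-- necessity of condition (i) for `(ℓ^p, ℓ^q)` boundedness of `J_{Q₁,Q₂,λ}`. -/
theorem discrete_fractional_radon_necessary_i
    (k : ℕ) (hk : 1 ≤ k)
    (A₁ A₂ : Matrix (Fin k) (Fin k) ℤ)
    (hA₁symm : A₁.IsSymm) (hA₂symm : A₂.IsSymm)
    (hA₁pos : (A₁.map ((↑) : ℤ → ℝ)).PosDef)
    (hA₂pos : (A₂.map ((↑) : ℤ → ℝ)).PosDef)
    (hA₁even : ∀ i, 2 ∣ A₁ i i) (hA₂even : ∀ i, 2 ∣ A₂ i i)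
    (Q₁ Q₂ : (Fin k → ℤ) → ℤ)
    (hQ₁ : ∀ x, 2 * Q₁ x = x ⬝ᵥ A₁.mulVec x)
    (hQ₂ : ∀ x, 2 * Q₂ x = x ⬝ᵥ A₂.mulVec x)
    (lam : ℝ) (hlam₀ : 0 < lam) (hlam₁ : lam < 1)
    (p q : ℝ) (hp₁ : 1 ≤ p) (hq₁ : 1 ≤ q)
    (hbound : ∃ A : ℝ≥0, ∀ f : ((Fin k → ℤ) × ℤ) → ℂ, (Function.support f).Finite →
      eLpNorm
        (fun nt : (Fin k → ℤ) × ℤ =>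
          ∑' m : Fin k → ℤ,
            if m = 0 then 0
            else f (nt.1 - m, nt.2 - Q₁ m) /
              Complex.ofReal ((Q₂ m : ℝ) ^ ((k : ℝ) * lam / 2)))
        (ENNReal.ofReal q) Measure.count
      ≤ (A : ℝ≥0∞) * eLpNorm f (ENNReal.ofReal p) Measure.count) :
    1 / q ≤ 1 / p - (k : ℝ) / (k + 2) * (1 - lam) :=
  discrete_fractional_radon_necessary_i_general k hk A₁ A₂ hA₂pos Q₁ Q₂ hQ₁ hQ₂ lam hlam₀ p q hp₁
    hq₁ hbound
end
end

section
/- Let k ≥ 1 and let Q(x) = (1/2) xᵗ A x be a positive definite integral quadratic form in k variables. Then for all integers q ≥ 1 and a with gcd(a,q) = 1, and all b ∈ ℤ^k, the Gauss sum satisfies |S_Q(a,b;q)| ≤ (det A)^{k/2} q^{k/2}. -/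
/-!
Weyl differencing. Writing `F` for the phase reduced mod `q`, `F (x + h) - F x - F h` is the
linear form `x ↦ -a x ⬝ᵥ A h`, so `|S|² = ∑ₕ e(F h) ∑ₓ e(-a x ⬝ᵥ A h / q)`. Since `a` is
invertible mod `q`, the inner sum vanishes unless `A h ≡ 0 (mod q)`, whence
`|S|² ≤ q ^ k · #{h mod q | A h ≡ 0}`. Multiplying by the adjugate, such `h` satisfy
`det A • h ≡ 0`, and in the cyclic group `ℤ/qℤ` at most `det A` elements are killed by `det A`;
so `|S|² ≤ q ^ k (det A) ^ k`.
-/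

open Matrix Finset ComplexConjugate

theorem Int.cast_dotProduct {ι R : Type*} [Fintype ι] [Ring R] (x y : ι → ℤ) :
    ((x ⬝ᵥ y : ℤ) : R) = (fun i => (x i : R)) ⬝ᵥ fun i => (y i : R) :=
  RingHom.map_dotProduct (Int.castRingHom R) x y

theorem Int.cast_mulVec {m n R : Type*} [Fintype n] [Ring R] (M : Matrix m n ℤ) (y : n → ℤ) :
    (fun i => ((M *ᵥ y) i : R)) = M.map (↑) *ᵥ fun i => (y i : R) :=
  funext (RingHom.map_mulVec (Int.castRingHom R) M y)

open scoped Classical in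
theorem AddChar.norm_sum_sq_le_of_map_add {G R : Type*} [AddCommGroup G] [Fintype G]
    [AddCommGroup R] [Finite R] (ψ : AddChar R ℂ) (F : G → R) (B : G → G →+ R)
    (hF : ∀ x h, F (x + h) = F x + F h + B h x) :
    ‖∑ x, ψ (F x)‖ ^ 2 ≤ Fintype.card G * #{h | ∀ x, ψ (B h x) = 1} := by
  have hdiff : ∀ x h, ψ (F (x + h)) * conj (ψ (F x)) = ψ (F h) * ψ (B h x) := fun x h => by
    rw [← map_neg_eq_conj, ← map_add_eq_mul, ← map_add_eq_mul, hF]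
    abel_nf
  have hinner : ∀ h, ∑ x, ψ (B h x) = if ∀ x, ψ (B h x) = 1 then (Fintype.card G : ℂ) else 0 :=
    fun h => by
      simpa [DFunLike.ext_iff] using (ψ.compAddMonoidHom (B h)).sum_eq_ite
  have hexpand : (∑ x, ψ (F x)) * conj (∑ x, ψ (F x)) = ∑ h, ψ (F h) * ∑ x, ψ (B h x) := by
    calc (∑ y, ψ (F y)) * conj (∑ x, ψ (F x))
        = ∑ x, ∑ h, ψ (F (x + h)) * conj (ψ (F x)) := by
          rw [map_sum, sum_mul_sum, sum_comm]
          exact sum_congr rfl fun x _ =>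
            (Fintype.sum_equiv (Equiv.addLeft x) _ _ fun _ => rfl).symm
      _ = ∑ h, ψ (F h) * ∑ x, ψ (B h x) := by
          simp_rw [hdiff, mul_sum]
          exact sum_comm
  calc ‖∑ x, ψ (F x)‖ ^ 2 = ‖∑ h, ψ (F h) * ∑ x, ψ (B h x)‖ := by
        rw [← hexpand, norm_mul, RCLike.norm_conj, sq]
    _ ≤ ∑ h, ‖ψ (F h) * ∑ x, ψ (B h x)‖ := norm_sum_le _ _
    _ = ∑ h, if ∀ x, ψ (B h x) = 1 then (Fintype.card G : ℝ) else 0 := by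
        refine sum_congr rfl fun h _ => ?_
        rw [norm_mul, AddChar.norm_apply, one_mul, hinner]
        split_ifs <;> simp
    _ = Fintype.card G * #{h | ∀ x, ψ (B h x) = 1} := by
        rw [sum_ite, sum_const, sum_const_zero, add_zero, nsmul_eq_mul, mul_comm]

theorem AddChar.IsPrimitive.eq_zero_of_forall_dotProduct {R : Type*} [CommRing R]
    {ι : Type*} [Fintype ι] [DecidableEq ι] {ψ : AddChar R ℂ} (hψ : ψ.IsPrimitive)
    {c : ι → R} (hc : ∀ x, ψ (x ⬝ᵥ c) = 1) : c = 0 := by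
  funext i
  by_contra hci
  refine hψ hci (DFunLike.ext _ _ fun y => ?_)
  simpa [mul_comm] using hc (Pi.single i y)

theorem card_mulVec_eq_zero_le {R : Type*} [CommRing R] [Fintype R] [DecidableEq R]
    [IsAddCyclic R] {ι : Type*} [Fintype ι] [DecidableEq ι] (M : Matrix ι ι R) {D : ℕ}
    (hD : 0 < D) (hdet : M.det = D) : #{h | M *ᵥ h = 0} ≤ D ^ Fintype.card ι := by
  have hsub : ({h | M *ᵥ h = 0} : Finset (ι → R)) ⊆
      Fintype.piFinset fun _ : ι => {x : R | D • x = 0} := by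
    intro h hh
    have hdet_smul : M.det • h = 0 := by
      rw [← one_mulVec h, ← smul_mulVec, ← adjugate_mul, ← mulVec_mulVec,
        (mem_filter.mp hh).2, mulVec_zero]
    simp only [Fintype.mem_piFinset, mem_filter, mem_univ, true_and]
    intro i
    simpa [hdet, nsmul_eq_mul] using congrFun hdet_smul i
  calc #{h | M *ᵥ h = 0} ≤ #{x : R | D • x = 0} ^ Fintype.card ι := by
        simpa using card_le_card hsub
    _ ≤ D ^ Fintype.card ι := Nat.pow_le_pow_left (IsAddCyclic.card_nsmul_eq_zero_le hD) _

theorem sum_piFinset_Icc_intCast {ι M : Type*} [Fintype ι] [DecidableEq ι] [AddCommMonoid M]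
    (n : ℕ) [NeZero n] (g : (ι → ZMod n) → M) :
    ∑ r ∈ Fintype.piFinset fun _ : ι => Icc (1 : ℤ) n, g (fun i => r i) = ∑ v, g v := by
  -- `x ↦ n - (-x).val` picks the representative of `x` in `[1, n]`
  have hrep_mem : ∀ x : ZMod n, (n : ℤ) - (-x).val ∈ Icc (1 : ℤ) n := fun x => by
    have := ZMod.val_lt (-x)
    simp only [mem_Icc]
    omega
  have hrep_cast : ∀ x : ZMod n, (((n : ℤ) - (-x).val : ℤ) : ZMod n) = x := fun x => by
    simp
  have hrep_of_mem : ∀ r ∈ Icc (1 : ℤ) n, (n : ℤ) - (-(r : ZMod n)).val = r := fun r hr => by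
    rw [mem_Icc] at hr
    have h : -(r : ZMod n) = ((n - r : ℤ) : ZMod n) := by simp
    rw [h, ZMod.val_intCast, Int.emod_eq_of_lt (by omega) (by omega)]
    ring
  refine sum_nbij' (fun r i => r i) (fun v i => n - (-v i).val) (fun _ _ => mem_univ _)
    (fun v _ => Fintype.mem_piFinset.mpr fun i => hrep_mem (v i)) (fun r hr => ?_)
    (fun v _ => funext fun i => hrep_cast (v i)) (fun _ _ => rfl)
  exact funext fun i => hrep_of_mem (r i) (Fintype.mem_piFinset.mp hr i)

section IntegralQuadraticForm

variable {ι : Type*} [Fintype ι] {A : Matrix ι ι ℤ} {Q : (ι → ℤ) → ℤ}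

theorem quad_add_eq (hA : A.IsSymm) (hQ : ∀ x, 2 * Q x = x ⬝ᵥ A *ᵥ x) (x y : ι → ℤ) :
    Q (x + y) = Q x + Q y + x ⬝ᵥ A *ᵥ y := by
  have hsymm : y ⬝ᵥ A *ᵥ x = x ⬝ᵥ A *ᵥ y := by
    rw [dotProduct_mulVec, ← mulVec_transpose, hA.eq, dotProduct_comm]
  have h := hQ (x + y)
  rw [mulVec_add, dotProduct_add, add_dotProduct, add_dotProduct, ← hQ, ← hQ, hsymm] at h
  linarith

theorem quad_smul_eq (hQ : ∀ x, 2 * Q x = x ⬝ᵥ A *ᵥ x) (c : ℤ) (x : ι → ℤ) :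
    Q (c • x) = c ^ 2 * Q x := by
  have h := hQ (c • x)
  rw [mulVec_smul, dotProduct_smul, smul_dotProduct, ← hQ, smul_eq_mul, smul_eq_mul] at h
  linarith

theorem intCast_quad_eq_of_intCast_eq (hA : A.IsSymm) (hQ : ∀ x, 2 * Q x = x ⬝ᵥ A *ᵥ x)
    {n : ℕ} {x y : ι → ℤ} (hxy : ∀ i, (x i : ZMod n) = y i) : (Q x : ZMod n) = Q y := by
  have hdvd : ∀ i, (n : ℤ) ∣ y i - x i := fun i =>
    (ZMod.intCast_eq_intCast_iff_dvd_sub _ _ _).mp (hxy i)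
  choose e he using hdvd
  have hy : y = x + (n : ℤ) • e := funext fun i => by simp [← he i]
  rw [hy, quad_add_eq hA hQ, quad_smul_eq hQ, mulVec_smul, dotProduct_smul, smul_eq_mul]
  push_cast
  simp

variable (Q) in
def quadMod (n : ℕ) (v : ι → ZMod n) : ZMod n := Q fun i => ((v i).val : ℤ)

theorem quadMod_intCast (hA : A.IsSymm) (hQ : ∀ x, 2 * Q x = x ⬝ᵥ A *ᵥ x) {n : ℕ} [NeZero n]
    (x : ι → ℤ) : quadMod Q n (fun i => x i) = Q x :=
  intCast_quad_eq_of_intCast_eq hA hQ fun i => by simp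

theorem quadMod_add (hA : A.IsSymm) (hQ : ∀ x, 2 * Q x = x ⬝ᵥ A *ᵥ x) {n : ℕ} [NeZero n]
    (v w : ι → ZMod n) :
    quadMod Q n (v + w) = quadMod Q n v + quadMod Q n w + v ⬝ᵥ A.map (↑) *ᵥ w := by
  set x : ι → ℤ := fun i => (v i).val
  set y : ι → ℤ := fun i => (w i).val
  have hv : v = fun i => (x i : ZMod n) := funext fun i => by simp [x]
  have hw : w = fun i => (y i : ZMod n) := funext fun i => by simp [y]
  have hvw : v + w = fun i => ((x + y) i : ZMod n) := by rw [hv, hw]; ext; simp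
  rw [hvw, hv, hw, quadMod_intCast hA hQ, quadMod_intCast hA hQ, quadMod_intCast hA hQ,
    quad_add_eq hA hQ, Int.cast_add, Int.cast_add, Int.cast_dotProduct, Int.cast_mulVec]

end IntegralQuadraticForm

section GaussPhase

variable {ι : Type*} [Fintype ι] {A : Matrix ι ι ℤ} {Q : (ι → ℤ) → ℤ} {n : ℕ} [NeZero n]

variable (Q n) in
def gaussPhase (a : ℤ) (b : ι → ℤ) (v : ι → ZMod n) : ZMod n :=
  -(a * quadMod Q n v + v ⬝ᵥ fun i => (b i : ZMod n))

theorem gaussPhase_add (hA : A.IsSymm) (hQ : ∀ x, 2 * Q x = x ⬝ᵥ A *ᵥ x) (a : ℤ)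
    (b : ι → ℤ) (v h : ι → ZMod n) :
    gaussPhase Q n a b (v + h) =
      gaussPhase Q n a b v + gaussPhase Q n a b h + v ⬝ᵥ -((a : ZMod n) • A.map (↑) *ᵥ h) := by
  simp only [gaussPhase, quadMod_add hA hQ, add_dotProduct, dotProduct_neg, dotProduct_smul,
    smul_eq_mul]
  ring

theorem sum_exp_eq_sum_stdAddChar_gaussPhase [DecidableEq ι] (hA : A.IsSymm)
    (hQ : ∀ x, 2 * Q x = x ⬝ᵥ A *ᵥ x) (a : ℤ) (b : ι → ℤ) :
    ∑ r ∈ Fintype.piFinset fun _ : ι => Icc (1 : ℤ) n,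
        Complex.exp ((-2 : ℂ) * Real.pi * Complex.I * ((Q r * a + r ⬝ᵥ b : ℤ) : ℂ) / ((n : ℤ) : ℂ))
      = ∑ v, ZMod.stdAddChar (gaussPhase Q n a b v) := by
  rw [← sum_piFinset_Icc_intCast]
  refine sum_congr rfl fun r _ => ?_
  have hphase : gaussPhase Q n a b (fun i => r i) = ((-(Q r * a + r ⬝ᵥ b) : ℤ) : ZMod n) := by
    rw [Int.cast_neg, Int.cast_add, Int.cast_mul, Int.cast_dotProduct,
      ← quadMod_intCast hA hQ, mul_comm, gaussPhase]
  rw [hphase, ZMod.stdAddChar_coe]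
  push_cast
  ring_nf

theorem norm_sum_stdAddChar_gaussPhase_sq_le [DecidableEq ι] (hA : A.IsSymm)
    (hQ : ∀ x, 2 * Q x = x ⬝ᵥ A *ᵥ x) {a : ℤ} (ha : IsUnit (a : ZMod n)) (b : ι → ℤ) {D : ℕ}
    (hD : 0 < D) (hdet : A.det = D) :
    ‖∑ v, ZMod.stdAddChar (gaussPhase Q n a b v)‖ ^ 2 ≤
      n ^ Fintype.card ι * D ^ Fintype.card ι := by
  let c : (ι → ZMod n) → ι → ZMod n := fun h => -((a : ZMod n) • A.map (↑) *ᵥ h)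
  have hkernel : #{h | ∀ x, ZMod.stdAddChar (x ⬝ᵥ c h) = 1} ≤
      #{h | A.map ((↑) : ℤ → ZMod n) *ᵥ h = 0} :=
    card_le_card <| monotone_filter_right _ fun h _ hh => by
      simpa [c, ha.smul_eq_zero] using
        (ZMod.isPrimitive_stdAddChar n).eq_zero_of_forall_dotProduct hh
  have hcount := card_mulVec_eq_zero_le (A.map ((↑) : ℤ → ZMod n)) hD
    (by rw [← Int.cast_det, hdet, Int.cast_natCast])
  have hsq := AddChar.norm_sum_sq_le_of_map_add ZMod.stdAddChar (gaussPhase Q n a b)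
    (fun h => AddMonoidHom.mk' (· ⬝ᵥ c h) fun x y => add_dotProduct x y _)
    (gaussPhase_add hA hQ a b)
  rw [Fintype.card_fun, ZMod.card] at hsq
  refine hsq.trans ?_
  push_cast
  gcongr
  exact_mod_cast hkernel.trans hcount

end GaussPhase

theorem le_rpow_half_mul_rpow_half_of_sq_le {x c d : ℝ} (hx : 0 ≤ x) (hc : 0 ≤ c) (hd : 0 ≤ d)
    {k : ℕ} (h : x ^ 2 ≤ c ^ k * d ^ k) : x ≤ c ^ ((k : ℝ) / 2) * d ^ ((k : ℝ) / 2) := by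
  have hsq : ∀ t : ℝ, 0 ≤ t → (t ^ ((k : ℝ) / 2)) ^ 2 = t ^ k := fun t ht => by
    rw [← Real.rpow_natCast (t ^ _), ← Real.rpow_mul ht, ← Real.rpow_natCast]
    norm_num
  rw [← pow_le_pow_iff_left₀ hx (by positivity) two_ne_zero, mul_pow, hsq c hc, hsq d hd]
  exact h

theorem gauss_sum_bound_general
    (k : ℕ)
    (A : Matrix (Fin k) (Fin k) ℤ)
    (hAsymm : A.IsSymm)
    (hApos : (A.map ((↑) : ℤ → ℝ)).PosDef)
    (Q : (Fin k → ℤ) → ℤ)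
    (hQ : ∀ x, 2 * Q x = x ⬝ᵥ A.mulVec x)
    (q : ℤ) (hq : 1 ≤ q) (a : ℤ) (ha : Int.gcd a q = 1) (b : Fin k → ℤ) :
    ‖∑ r ∈ Fintype.piFinset (fun _ : Fin k => Finset.Icc (1 : ℤ) q),
        Complex.exp ((-2 : ℂ) * Real.pi * Complex.I *
          ((Q r * a + r ⬝ᵥ b : ℤ) : ℂ) / (q : ℂ))‖
      ≤ (A.det : ℝ) ^ ((k : ℝ) / 2) * (q : ℝ) ^ ((k : ℝ) / 2) := by
  obtain ⟨n, rfl⟩ := Int.eq_ofNat_of_zero_le (by omega : 0 ≤ q)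
  have : NeZero n := ⟨by omega⟩
  have hdet : 0 < A.det := by exact_mod_cast (Int.cast_det (R := ℝ) A).symm ▸ hApos.det_pos
  obtain ⟨D, hD⟩ := Int.eq_ofNat_of_zero_le hdet.le
  have hunit : IsUnit (a : ZMod n) := by
    rw [ZMod.coe_int_isUnit_iff_isCoprime, Int.isCoprime_iff_gcd_eq_one, Int.gcd_comm]
    exact ha
  rw [sum_exp_eq_sum_stdAddChar_gaussPhase hAsymm hQ, hD]
  push_cast
  refine le_rpow_half_mul_rpow_half_of_sq_le (norm_nonneg _) (Nat.cast_nonneg D)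
    (Nat.cast_nonneg n) ?_
  have hsq := norm_sum_stdAddChar_gaussPhase_sq_le hAsymm hQ hunit b (by omega) hD
  rw [Fintype.card_fin] at hsq
  linarith

/-- the Gauss sum bound `|S_Q(a,b;q)| ≤ (det A)^{k/2} q^{k/2}`. -/
theorem gauss_sum_bound
    (k : ℕ) (hk : 1 ≤ k)
    (A : Matrix (Fin k) (Fin k) ℤ)
    (hAsymm : A.IsSymm)
    (hApos : (A.map ((↑) : ℤ → ℝ)).PosDef)
    (hAeven : ∀ i, 2 ∣ A i i)
    (Q : (Fin k → ℤ) → ℤ)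
    (hQ : ∀ x, 2 * Q x = x ⬝ᵥ A.mulVec x)
    (q : ℤ) (hq : 1 ≤ q) (a : ℤ) (ha : Int.gcd a q = 1) (b : Fin k → ℤ) :
    ‖∑ r ∈ Fintype.piFinset (fun _ : Fin k => Finset.Icc (1 : ℤ) q),
        Complex.exp ((-2 : ℂ) * Real.pi * Complex.I *
          ((Q r * a + r ⬝ᵥ b : ℤ) : ℂ) / (q : ℂ))‖
      ≤ (A.det : ℝ) ^ ((k : ℝ) / 2) * (q : ℝ) ^ ((k : ℝ) / 2) :=
  gauss_sum_bound_general k A hAsymm hApos Q hQ q hq a ha b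
end

section
/- Let k ≥ 1 and let Q be a positive definite integral quadratic form in k variables with adjoint form Q*. For every c0 > 0 there exists a constant A, depending only on Q, k and c0, such that the following holds. Let y > 0, let α ∈ ℝ, let q ≥ 1 be an integer, and let β ∈ ℝ^k, and suppose q ≤ c0 y^{−1/2}, q|α| ≤ c0 y^{1/2}, and |β_i| ≤ 3/(4q) for each i. Then | ∑_{m ∈ ℤ^k, m ≠ 0} e^{−2π Q*(m/q + β)/(y + iα)} | ≤ A y^{−k/4} q^{k/2} (y² + α²)^{k/4}. -/
/-!
Write `u = y / (q² (y² + α²))`, so that `Re (1 / (y + iα)) = q² u`. Since `Q*` is positive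
definite and `|q βᵢ| ≤ 3/4`, the point `x = m/q + β` satisfies `|m|² ≤ 16 q² |x|²`, hence the
`m`-th term has modulus at most `exp (-κ u |m|²)` for a constant `κ > 0`. The hypotheses on `q`
imply `u ≥ 1/(2c₀²)`; splitting off half of the exponent, a term with `m ≠ 0` is at
most `exp (-κ u / 2) · exp (-κ |m|² / (4c₀²))`. The second factor sums to a constant (a Gaussian
sum over `ℤᵏ`), and `exp (-κ u / 2) ≪ u^(-k/4)`, which is the claimed bound.
-/

open Matrix

theorem Matrix.PosDef.exists_pos_mul_dotProduct_self_le {n : Type*} [Fintype n]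
    {M : Matrix n n ℝ} (hM : M.PosDef) :
    ∃ c > 0, ∀ x : n → ℝ, c * (x ⬝ᵥ x) ≤ x ⬝ᵥ M *ᵥ x := by
  rcases isEmpty_or_nonempty n with hn | hn
  · exact ⟨1, one_pos, fun x => by simp [dotProduct]⟩
  set f : (n → ℝ) → ℝ := fun x => x ⬝ᵥ M *ᵥ x
  have hf : Continuous f := by simp only [f, dotProduct, mulVec]; fun_prop
  obtain ⟨x₀, hx₀, hmin⟩ := (isCompact_sphere (0 : n → ℝ) 1).exists_isMinOn
    (NormedSpace.sphere_nonempty.mpr zero_le_one) hf.continuousOn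
  have hx₀ne : x₀ ≠ 0 := ne_zero_of_mem_sphere one_ne_zero ⟨x₀, hx₀⟩
  have hfx₀ : 0 < f x₀ := by simpa using hM.dotProduct_mulVec_pos hx₀ne
  refine ⟨f x₀ / Fintype.card n, by positivity, fun x => ?_⟩
  rcases eq_or_ne x 0 with rfl | hx
  · simp
  have hnorm : 0 < ‖x‖ := norm_pos_iff.mpr hx
  have hsphere : f x₀ * ‖x‖ ^ 2 ≤ f x := by
    have hmin' : f x₀ ≤ f (‖x‖⁻¹ • x) := hmin (by simp [norm_smul, hnorm.ne'])
    have hscale : f (‖x‖⁻¹ • x) = ‖x‖⁻¹ * (‖x‖⁻¹ * f x) := by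
      simp only [f, mulVec_smul, dotProduct_smul, smul_dotProduct, smul_eq_mul]
    calc f x₀ * ‖x‖ ^ 2 ≤ f (‖x‖⁻¹ • x) * ‖x‖ ^ 2 := by gcongr
      _ = f x := by rw [hscale]; field_simp
  have hdot : x ⬝ᵥ x ≤ Fintype.card n * ‖x‖ ^ 2 := by
    calc x ⬝ᵥ x = ∑ i, |x i| ^ 2 := by simp [dotProduct, sq]
      _ ≤ ∑ _i : n, ‖x‖ ^ 2 := by
        gcongr with i; exact norm_le_pi_norm x i
      _ = Fintype.card n * ‖x‖ ^ 2 := by simp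
  calc f x₀ / Fintype.card n * (x ⬝ᵥ x)
      ≤ f x₀ / Fintype.card n * (Fintype.card n * ‖x‖ ^ 2) := by gcongr
    _ = f x₀ * ‖x‖ ^ 2 := by field_simp
    _ ≤ f x := hsphere

theorem summable_pi_prod_of_nonneg {ι κ : Type*} [Fintype ι] {g : κ → ℝ} (hg : Summable g)
    (hg0 : 0 ≤ g) : Summable fun m : ι → κ => ∏ i, g (m i) := by
  classical
  refine summable_of_sum_le (c := ∏ _i : ι, ∑' j, g j)
    (fun m => Finset.prod_nonneg fun i _ => hg0 _) fun s => ?_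
  calc ∑ m ∈ s, ∏ i, g (m i)
      ≤ ∑ m ∈ Fintype.piFinset fun i => s.image (· i), ∏ i, g (m i) :=
        Finset.sum_le_sum_of_subset_of_nonneg
          (fun m hm => Fintype.mem_piFinset.mpr fun i => Finset.mem_image_of_mem _ hm)
          fun m _ _ => Finset.prod_nonneg fun i _ => hg0 _
    _ = ∏ i, ∑ j ∈ s.image (· i), g j := (Finset.prod_univ_sum _ _).symm
    _ ≤ ∏ _i : ι, ∑' j, g j := by
        gcongr with i
        · exact fun i _ => Finset.sum_nonneg fun j _ => hg0 j
        · exact hg.sum_le_tsum _ fun j _ => hg0 j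

theorem summable_exp_neg_mul_sq_int {c : ℝ} (hc : 0 < c) :
    Summable fun n : ℤ => Real.exp (-c * (n : ℝ) ^ 2) := by
  have h := ((summable_jacobiTheta₂_term_iff 0 (c / Real.pi * Complex.I)).mpr
    (by simpa using div_pos hc Real.pi_pos)).norm
  refine h.congr fun n => ?_
  rw [norm_jacobiTheta₂_term]
  have him : (c / Real.pi * Complex.I).im = c / Real.pi := by simp
  rw [him, Complex.zero_im]
  congr 1
  field_simp
  ring

theorem summable_exp_neg_mul_sum_sq {ι : Type*} [Fintype ι] {c : ℝ} (hc : 0 < c) :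
    Summable fun m : ι → ℤ => Real.exp (-c * ∑ i, (m i : ℝ) ^ 2) := by
  refine (summable_pi_prod_of_nonneg (summable_exp_neg_mul_sq_int hc)
    fun n => (Real.exp_pos _).le).congr fun m => ?_
  rw [Finset.mul_sum, Real.exp_sum]

theorem sq_le_sixteen_mul_sq_add_of_abs_le (m : ℤ) {b : ℝ} (hb : |b| ≤ 3 / 4) :
    (m : ℝ) ^ 2 ≤ 16 * ((m : ℝ) + b) ^ 2 := by
  rcases eq_or_ne m 0 with rfl | hm
  · push_cast; nlinarith [sq_nonneg b]
  have hm1 : (1 : ℝ) ≤ |(m : ℝ)| := by exact_mod_cast Int.one_le_abs hm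
  have hquarter : |(m : ℝ)| / 4 ≤ |(m : ℝ) + b| := by
    have := abs_sub_abs_le_abs_sub (m : ℝ) (-b)
    rw [abs_neg, sub_neg_eq_add] at this
    linarith
  calc (m : ℝ) ^ 2 = 16 * (|(m : ℝ)| / 4) ^ 2 := by rw [div_pow, sq_abs]; ring
    _ ≤ 16 * |(m : ℝ) + b| ^ 2 := by gcongr
    _ = 16 * ((m : ℝ) + b) ^ 2 := by rw [sq_abs]

theorem one_le_sum_sq_of_ne_zero {ι : Type*} [Fintype ι] {m : ι → ℤ} (hm : m ≠ 0) :
    1 ≤ ∑ i, (m i : ℝ) ^ 2 := by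
  obtain ⟨i, hi⟩ := Function.ne_iff.mp hm
  calc (1 : ℝ) ≤ (m i : ℝ) ^ 2 := by
        rw [← sq_abs]; exact one_le_pow₀ (by exact_mod_cast Int.one_le_abs hi)
    _ ≤ ∑ j, (m j : ℝ) ^ 2 :=
        Finset.single_le_sum (f := fun j => (m j : ℝ) ^ 2) (fun j _ => sq_nonneg _)
          (Finset.mem_univ i)

theorem Complex.norm_exp_ofReal_div (t : ℝ) (z : ℂ) :
    ‖Complex.exp (t / z)‖ = Real.exp (t * z.re / Complex.normSq z) := by
  rw [Complex.norm_exp, div_eq_mul_inv, Complex.re_ofReal_mul, Complex.inv_re, mul_div_assoc]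

theorem exp_neg_mul_le_exp_mul_exp {N s s₀ : ℝ} (hN : 1 ≤ N) (hs₀ : 0 ≤ s₀) (hs : s₀ ≤ s) :
    Real.exp (-(s * N)) ≤ Real.exp (-s / 2) * Real.exp (-(s₀ / 2) * N) := by
  rw [← Real.exp_add, Real.exp_le_exp]
  nlinarith

theorem exists_exp_neg_mul_le_mul_rpow_neg {a c : ℝ} (ha : 0 ≤ a) (hc : 0 < c) :
    ∃ B, ∀ u > 0, Real.exp (-(c * u)) ≤ B * u ^ (-a) := by
  refine ⟨Real.exp (a * Real.log (a / c)), fun u hu => ?_⟩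
  rw [Real.rpow_def_of_pos hu, ← Real.exp_add, Real.exp_le_exp]
  rcases ha.eq_or_lt with rfl | ha
  · simp only [zero_mul, mul_zero, neg_zero, add_zero, neg_nonpos]; positivity
  have hlog := Real.log_le_sub_one_of_pos (show 0 < c * u / a by positivity)
  rw [Real.log_div (by positivity) ha.ne', Real.log_mul hc.ne' hu.ne'] at hlog
  rw [Real.log_div ha.ne' hc.ne']
  have hmul := mul_le_mul_of_nonneg_left hlog ha.le
  have hcancel : a * (c * u / a - 1) = c * u - a := by field_simp
  linarith

theorem sq_mul_add_sq_le_of_le_rpow {c y q α : ℝ} (hy : 0 < y) (hq : 0 ≤ q)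
    (hqy : q ≤ c * y ^ (-(1 : ℝ) / 2)) (hqα : q * |α| ≤ c * y ^ ((1 : ℝ) / 2)) :
    q ^ 2 * (y ^ 2 + α ^ 2) ≤ 2 * c ^ 2 * y := by
  rw [neg_div, Real.rpow_neg hy.le, ← Real.sqrt_eq_rpow] at hqy
  rw [← Real.sqrt_eq_rpow] at hqα
  have hsqrt : 0 < √y := Real.sqrt_pos.mpr hy
  have h1 : (q * √y) ^ 2 ≤ c ^ 2 := by
    rw [← div_eq_mul_inv, le_div_iff₀ hsqrt] at hqy
    exact pow_le_pow_left₀ (by positivity) hqy 2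
  have h2 : (q * |α|) ^ 2 ≤ (c * √y) ^ 2 := pow_le_pow_left₀ (by positivity) hqα 2
  rw [mul_pow, Real.sq_sqrt hy.le] at h1
  rw [mul_pow, mul_pow, sq_abs, Real.sq_sqrt hy.le] at h2
  nlinarith

theorem div_sq_mul_rpow_neg {y q D : ℝ} (hy : 0 < y) (hq : 0 < q) (hD : 0 < D) (a : ℝ) :
    (y / (q ^ 2 * D)) ^ (-a) = y ^ (-a) * q ^ (2 * a) * D ^ a := by
  have hq2 : (q ^ 2) ^ (-a) = (q ^ (2 * a))⁻¹ := by
    rw [Real.rpow_neg (by positivity), ← Real.rpow_natCast, ← Real.rpow_mul hq.le]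
    norm_num
  rw [Real.div_rpow hy.le (by positivity), Real.mul_rpow (by positivity) hD.le, hq2,
    Real.rpow_neg hD.le, div_eq_mul_inv, mul_inv, inv_inv, inv_inv]
  ring

theorem norm_cexp_theta_term_le {ι : Type*} [Fintype ι] {Qs : (ι → ℝ) → ℝ} {c : ℝ}
    (hc : 0 ≤ c) (hQs : ∀ x, c * (x ⬝ᵥ x) ≤ Qs x) {y α q : ℝ} (hy : 0 < y) (hq : 0 < q)
    {β : ι → ℝ} (hβ : ∀ i, |β i| ≤ 3 / (4 * q)) (m : ι → ℤ) :
    ‖Complex.exp ((-2 : ℂ) * Real.pi * ((Qs (fun i => (m i : ℝ) / q + β i) : ℝ) : ℂ) /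
        ((y : ℂ) + Complex.I * (α : ℝ)))‖
      ≤ Real.exp (-(Real.pi * c / 8 * (y / (q ^ 2 * (y ^ 2 + α ^ 2))) * ∑ i, (m i : ℝ) ^ 2)) := by
  set x : ι → ℝ := fun i => (m i : ℝ) / q + β i
  have hx : ∑ i, (m i : ℝ) ^ 2 ≤ 16 * q ^ 2 * (x ⬝ᵥ x) := by
    rw [dotProduct, Finset.mul_sum]
    refine Finset.sum_le_sum fun i _ => ?_
    have hqβ : |q * β i| ≤ 3 / 4 := by
      rw [abs_mul, abs_of_pos hq, ← le_div_iff₀' hq, div_div]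
      exact hβ i
    calc (m i : ℝ) ^ 2 ≤ 16 * (m i + q * β i) ^ 2 := sq_le_sixteen_mul_sq_add_of_abs_le _ hqβ
      _ = 16 * q ^ 2 * (x i * x i) := by simp only [x]; field_simp
  have hD : 0 < y ^ 2 + α ^ 2 := by positivity
  have hz : Complex.normSq ((y : ℂ) + Complex.I * (α : ℝ)) = y ^ 2 + α ^ 2 := by
    simp [Complex.normSq_apply]; ring
  rw [show (-2 : ℂ) * Real.pi * ((Qs x : ℝ) : ℂ) = ((-2 * Real.pi * Qs x : ℝ) : ℂ) by
      push_cast; ring, Complex.norm_exp_ofReal_div, Real.exp_le_exp, hz]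
  simp only [Complex.add_re, Complex.ofReal_re, Complex.mul_re, Complex.I_re, Complex.I_im,
    Complex.ofReal_im, zero_mul, one_mul, sub_self, add_zero]
  calc -2 * Real.pi * Qs x * y / (y ^ 2 + α ^ 2)
      ≤ -2 * Real.pi * (c * (x ⬝ᵥ x)) * y / (y ^ 2 + α ^ 2) := by
        gcongr ?_ * y / _
        nlinarith [hQs x, Real.pi_pos]
    _ = -(Real.pi * c / 8 * (y / (q ^ 2 * (y ^ 2 + α ^ 2))) * (16 * q ^ 2 * (x ⬝ᵥ x))) := by
        field_simp; ring
    _ ≤ -(Real.pi * c / 8 * (y / (q ^ 2 * (y ^ 2 + α ^ 2))) * ∑ i, (m i : ℝ) ^ 2) := by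
        gcongr

theorem theta_tail_bound_general
    (k : ℕ)
    (A : Matrix (Fin k) (Fin k) ℤ)
    (hApos : (A.map ((↑) : ℤ → ℝ)).PosDef)
    (Qstar : (Fin k → ℝ) → ℝ)
    (hQstar : ∀ x, Qstar x = (1 / 2) * (x ⬝ᵥ ((A.map ((↑) : ℤ → ℝ))⁻¹).mulVec x))
    (c₀ : ℝ) (hc₀ : 0 < c₀) :
    ∃ C : ℝ, ∀ (y : ℝ), 0 < y → ∀ (α : ℝ) (q : ℤ), 1 ≤ q → ∀ (β : Fin k → ℝ),
      (q : ℝ) ≤ c₀ * y ^ (-(1 : ℝ) / 2) →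
      (q : ℝ) * |α| ≤ c₀ * y ^ ((1 : ℝ) / 2) →
      (∀ i, |β i| ≤ 3 / (4 * (q : ℝ))) →
      ‖∑' m : Fin k → ℤ,
          if m = 0 then 0
          else Complex.exp ((-2 : ℂ) * Real.pi *
            ((Qstar (fun i => (m i : ℝ) / (q : ℝ) + β i) : ℝ) : ℂ) /
            ((y : ℂ) + Complex.I * (α : ℝ)))‖
        ≤ C * y ^ (-(k : ℝ) / 4) * (q : ℝ) ^ ((k : ℝ) / 2) *
            (y ^ 2 + α ^ 2) ^ ((k : ℝ) / 4) := by
  obtain ⟨lam, hlam, hlow⟩ := hApos.inv.exists_pos_mul_dotProduct_self_le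
  have hQlow : ∀ x, lam / 2 * (x ⬝ᵥ x) ≤ Qstar x := fun x => by rw [hQstar]; linarith [hlow x]
  set κ := Real.pi * (lam / 2) / 8
  set s₀ := κ / (2 * c₀ ^ 2)
  set w : (Fin k → ℤ) → ℝ := fun m => Real.exp (-(s₀ / 2) * ∑ i, (m i : ℝ) ^ 2)
  have hw : Summable w := summable_exp_neg_mul_sum_sq (by positivity)
  obtain ⟨B, hB⟩ := exists_exp_neg_mul_le_mul_rpow_neg (a := k / 4) (by positivity)
    (show 0 < κ / 2 by positivity)
  refine ⟨B * ∑' m, w m, fun y hy α q hq β hqy hqα hβ => ?_⟩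
  have hq0 : (0 : ℝ) < q := Int.cast_pos.mpr (by omega)
  set u := y / ((q : ℝ) ^ 2 * (y ^ 2 + α ^ 2))
  have hs₀ : s₀ ≤ κ * u := by
    have hqu := sq_mul_add_sq_le_of_le_rpow hy hq0.le hqy hqα
    calc s₀ = κ * (y / (2 * c₀ ^ 2 * y)) := by simp only [s₀]; field_simp
      _ ≤ κ * u := by gcongr; exact div_le_div_of_nonneg_left hy.le (by positivity) hqu
  refine (tsum_of_norm_bounded (hw.hasSum.mul_left (Real.exp (-(κ * u) / 2))) fun m => ?_).trans ?_
  · split_ifs with hm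
    · rw [norm_zero]; positivity
    · exact (norm_cexp_theta_term_le (by positivity) hQlow hy hq0 hβ m).trans
        (exp_neg_mul_le_exp_mul_exp (one_le_sum_sq_of_ne_zero hm) (by positivity) hs₀)
  · calc Real.exp (-(κ * u) / 2) * ∑' m, w m = Real.exp (-(κ / 2 * u)) * ∑' m, w m := by ring_nf
      _ ≤ B * u ^ (-(k / 4 : ℝ)) * ∑' m, w m := by gcongr; exact hB u (by positivity)
      _ = _ := by rw [div_sq_mul_rpow_neg hy hq0 (by positivity)]; ring_nf

/-- the bound on the nonzero frequencies of the inverted theta series: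
`|∑_{m ≠ 0} e^{-2π Q*(m/q+β)/(y+iα)}| ≤ A y^{-k/4} q^{k/2} (y²+α²)^{k/4}`. -/
theorem theta_tail_bound
    (k : ℕ) (hk : 1 ≤ k)
    (A : Matrix (Fin k) (Fin k) ℤ)
    (hAsymm : A.IsSymm)
    (hApos : (A.map ((↑) : ℤ → ℝ)).PosDef)
    (hAeven : ∀ i, 2 ∣ A i i)
    (Q : (Fin k → ℤ) → ℤ)
    (hQ : ∀ x, 2 * Q x = x ⬝ᵥ A.mulVec x)
    (Qstar : (Fin k → ℝ) → ℝ)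
    (hQstar : ∀ x, Qstar x = (1 / 2) * (x ⬝ᵥ ((A.map ((↑) : ℤ → ℝ))⁻¹).mulVec x))
    (c₀ : ℝ) (hc₀ : 0 < c₀) :
    ∃ C : ℝ, ∀ (y : ℝ), 0 < y → ∀ (α : ℝ) (q : ℤ), 1 ≤ q → ∀ (β : Fin k → ℝ),
      (q : ℝ) ≤ c₀ * y ^ (-(1 : ℝ) / 2) →
      (q : ℝ) * |α| ≤ c₀ * y ^ ((1 : ℝ) / 2) →
      (∀ i, |β i| ≤ 3 / (4 * (q : ℝ))) →
      ‖∑' m : Fin k → ℤ,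
          if m = 0 then 0
          else Complex.exp ((-2 : ℂ) * Real.pi *
            ((Qstar (fun i => (m i : ℝ) / (q : ℝ) + β i) : ℝ) : ℂ) /
            ((y : ℂ) + Complex.I * (α : ℝ)))‖
        ≤ C * y ^ (-(k : ℝ) / 4) * (q : ℝ) ^ ((k : ℝ) / 2) *
            (y ^ 2 + α ^ 2) ^ ((k : ℝ) / 4) :=
  theta_tail_bound_general k A hApos Qstar hQstar c₀ hc₀
end

section
/- Let k ≥ 1. There exists a constant A, depending only on k, such that for every λ ∈ ℂ with Re λ = 1, every real α ≠ 0, every real B ≥ 0, every integer r ≥ 1, and every integer j satisfying 2^{−j−1} < 2^{−r} |α| ≤ 2^{−j}, one has | ∫_{2^{−j}}^{2^{−j+1}} y^{kλ/2 − 1} e^{−B/(y + iα)} (y + iα)^{−k/2} dy | ≤ A 2^{−rk/2}. -/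
/-!
On `[a, 2a]` with `a = 2^{-j}` the integrand is bounded trivially: `|y^{kλ/2-1}| = y^{k/2-1}`
since `Re λ = 1`, the exponential has modulus at most `1` because `Re (B/(y + iα)) ≥ 0`, and
`|y + iα|^{k/2} ≥ |α|^{k/2}`. Integrating over an interval of length `a` gives
`(2a/|α|)^{k/2}`, and the dyadic condition on `j` says `2a/|α| ≤ 2^{2-r}`.
-/

open Complex Set

noncomputable section

namespace OscillatoryIntegral

lemma norm_exp_neg_div_le_one {B : ℝ} (hB : 0 ≤ B) {z : ℂ} (hz : 0 ≤ z.re) :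
    ‖exp (-(B : ℂ) / z)‖ ≤ 1 := by
  rw [norm_exp, Real.exp_le_one_iff, div_re]
  simp only [neg_re, ofReal_re, neg_im, ofReal_im, neg_zero, zero_mul, zero_div, add_zero]
  exact div_nonpos_of_nonpos_of_nonneg (by nlinarith) (normSq_nonneg z)

lemma abs_im_rpow_le_norm_cpow {s : ℝ} (hs : 0 ≤ s) (z : ℂ) : |z.im| ^ s ≤ ‖z ^ (s : ℂ)‖ := by
  rw [norm_cpow_real]
  exact Real.rpow_le_rpow (abs_nonneg _) (abs_im_le_norm z) hs

lemma rpow_sub_one_le_of_mem_Ioc {a y s : ℝ} (ha : 0 < a) (hy : y ∈ Ioc a (2 * a))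
    (hs : 0 ≤ s) : y ^ (s - 1) ≤ (2 * a) ^ s / a := by
  have hy₀ : 0 < y := ha.trans hy.1
  rw [Real.rpow_sub_one hy₀.ne']
  exact div_le_div₀ (by positivity) (Real.rpow_le_rpow hy₀.le hy.2 hs) ha hy.1.le

lemma two_mul_rpow_div_le {u v c : ℝ} (h : (2 : ℝ) ^ (u - 1) < 2 ^ (-v) * c) :
    2 * 2 ^ u / c ≤ (2 : ℝ) ^ (2 - v) := by
  have hc : 0 < c := pos_of_mul_pos_right ((Real.rpow_pos_of_pos two_pos _).trans h)
    (Real.rpow_pos_of_pos two_pos _).le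
  have h₁ : (2 : ℝ) ^ u = 2 * 2 ^ (u - 1) := by
    rw [Real.rpow_sub_one two_ne_zero]; ring
  have h₂ : (2 : ℝ) ^ (2 - v) = 4 * 2 ^ (-v) := by
    rw [sub_eq_add_neg, Real.rpow_add two_pos]; norm_num
  rw [div_le_iff₀ hc, h₁, h₂]
  linarith

def integrand (s : ℝ) (lam : ℂ) (B α y : ℝ) : ℂ :=
  (y : ℂ) ^ ((s : ℂ) * lam - 1) * exp (-(B : ℂ) / ((y : ℂ) + I * α)) /
    ((y : ℂ) + I * α) ^ (s : ℂ)

variable {s : ℝ} {lam : ℂ} {B α a : ℝ}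

lemma norm_integrand_le (hs : 0 ≤ s) (hlam : lam.re = 1) (hB : 0 ≤ B) (hα : α ≠ 0)
    (ha : 0 < a) {y : ℝ} (hy : y ∈ Ioc a (2 * a)) :
    ‖integrand s lam B α y‖ ≤ (2 * a / |α|) ^ s / a := by
  have hy₀ : 0 < y := ha.trans hy.1
  have hnum : ‖(y : ℂ) ^ ((s : ℂ) * lam - 1)‖ = y ^ (s - 1) := by
    rw [norm_cpow_eq_rpow_re_of_pos hy₀]
    simp [hlam]
  have hexp : ‖exp (-(B : ℂ) / ((y : ℂ) + I * α))‖ ≤ 1 :=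
    norm_exp_neg_div_le_one hB (by simpa using hy₀.le)
  have hden : |α| ^ s ≤ ‖((y : ℂ) + I * α) ^ (s : ℂ)‖ := by
    simpa using abs_im_rpow_le_norm_cpow hs ((y : ℂ) + I * α)
  have hα₀ : 0 < |α| ^ s := by positivity
  calc ‖integrand s lam B α y‖ ≤ y ^ (s - 1) / |α| ^ s := by
        rw [integrand, norm_div, norm_mul, hnum]
        exact div_le_div₀ (by positivity) (mul_le_of_le_one_right (by positivity) hexp) hα₀ hden
    _ ≤ (2 * a) ^ s / a / |α| ^ s := by gcongr; exact rpow_sub_one_le_of_mem_Ioc ha hy hs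
    _ = (2 * a / |α|) ^ s / a := by
        rw [Real.div_rpow (by positivity) (abs_nonneg α)]; ring

lemma norm_integral_integrand_le (hs : 0 ≤ s) (hlam : lam.re = 1) (hB : 0 ≤ B) (hα : α ≠ 0)
    (ha : 0 < a) : ‖∫ y in a..2 * a, integrand s lam B α y‖ ≤ (2 * a / |α|) ^ s := by
  have hbound := intervalIntegral.norm_integral_le_of_norm_le_const (a := a) (b := 2 * a)
    fun y hy => norm_integrand_le hs hlam hB hα ha (by rwa [uIoc_of_le (by linarith)] at hy)
  rwa [show 2 * a - a = a by ring, abs_of_pos ha, div_mul_cancel₀ _ ha.ne'] at hbound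

end OscillatoryIntegral

open OscillatoryIntegral

theorem oscillatory_integral_bound_line_one_general
    (k : ℕ) :
    ∃ A : ℝ, ∀ (lam : ℂ), lam.re = 1 → ∀ (α : ℝ), α ≠ 0 → ∀ (B : ℝ), 0 ≤ B →
      ∀ (r : ℕ), 1 ≤ r → ∀ (j : ℤ),
        (2 : ℝ) ^ (-(j : ℝ) - 1) < (2 : ℝ) ^ (-(r : ℝ)) * |α| →
        (2 : ℝ) ^ (-(r : ℝ)) * |α| ≤ (2 : ℝ) ^ (-(j : ℝ)) →
        ‖∫ y in ((2 : ℝ) ^ (-(j : ℝ)))..((2 : ℝ) ^ (-(j : ℝ) + 1)),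
            (y : ℂ) ^ ((k : ℂ) * lam / 2 - 1) *
              Complex.exp (-(B : ℂ) / ((y : ℂ) + Complex.I * (α : ℝ))) /
              ((y : ℂ) + Complex.I * (α : ℝ)) ^ ((k : ℂ) / 2)‖
          ≤ A * (2 : ℝ) ^ (-(r : ℝ) * (k : ℝ) / 2) := by
  refine ⟨2 ^ (k : ℝ), fun lam hlam α hα B hB r _ j hj _ => ?_⟩
  have hupper : (2 : ℝ) ^ (-(j : ℝ) + 1) = 2 * 2 ^ (-(j : ℝ)) := by
    rw [Real.rpow_add_one two_ne_zero]; ring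
  have hexp : (k : ℂ) * lam / 2 - 1 = ((k / 2 : ℝ) : ℂ) * lam - 1 := by push_cast; ring
  have hhalf : (k : ℂ) / 2 = ((k / 2 : ℝ) : ℂ) := by push_cast; ring
  rw [hupper, hexp, hhalf]
  calc _ ≤ (2 * 2 ^ (-(j : ℝ)) / |α|) ^ ((k : ℝ) / 2) :=
        norm_integral_integrand_le (by positivity) hlam hB hα (by positivity)
    _ ≤ ((2 : ℝ) ^ (2 - (r : ℝ))) ^ ((k : ℝ) / 2) := by
        gcongr; exact two_mul_rpow_div_le hj
    _ = 2 ^ (k : ℝ) * 2 ^ (-(r : ℝ) * k / 2) := by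
        rw [← Real.rpow_mul zero_le_two, ← Real.rpow_add two_pos]; ring_nf

/-- the oscillatory integral bound on the line `Re λ = 1` in the double
decomposition of the major arcs. -/
theorem oscillatory_integral_bound_line_one
    (k : ℕ) (hk : 1 ≤ k) :
    ∃ A : ℝ, ∀ (lam : ℂ), lam.re = 1 → ∀ (α : ℝ), α ≠ 0 → ∀ (B : ℝ), 0 ≤ B →
      ∀ (r : ℕ), 1 ≤ r → ∀ (j : ℤ),
        (2 : ℝ) ^ (-(j : ℝ) - 1) < (2 : ℝ) ^ (-(r : ℝ)) * |α| →
        (2 : ℝ) ^ (-(r : ℝ)) * |α| ≤ (2 : ℝ) ^ (-(j : ℝ)) →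
        ‖∫ y in ((2 : ℝ) ^ (-(j : ℝ)))..((2 : ℝ) ^ (-(j : ℝ) + 1)),
            (y : ℂ) ^ ((k : ℂ) * lam / 2 - 1) *
              Complex.exp (-(B : ℂ) / ((y : ℂ) + Complex.I * (α : ℝ))) /
              ((y : ℂ) + Complex.I * (α : ℝ)) ^ ((k : ℂ) / 2)‖
          ≤ A * (2 : ℝ) ^ (-(r : ℝ) * (k : ℝ) / 2) :=
  oscillatory_integral_bound_line_one_general k
end
end

section
/- Let k ≥ 1 and let Q(x) = (1/2) xᵗ A x be a positive definite integral quadratic form in k variables with adjoint form Q*. Then for every y > 0, every θ ∈ ℝ and every η ∈ ℝ^k, ∫_{ℝ^k} e^{−2π Q*(φ)/(y + iθ)} e^{−2πi φ·η} dφ = (det A)^{1/2} (y + iθ)^{k/2} e^{−2π Q(η)(y + iθ)}, where the integrand is absolutely integrable. -/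
/-!
Write `A = N * N` with `N` the positive square root of `A` (as a real matrix). The substitution
`φ = N ψ`, of Jacobian `det N = (det A)^{1/2}`, turns `Q*(φ)` into `|ψ|² / 2` and `φ ⬝ η` into
`ψ ⬝ N η`, so the integral becomes the Fourier transform of the standard complex Gaussian
`e^{-π |ψ|² / w}` at `N η`, which is `w^{k/2} e^{-π w |N η|²}`; and `|N η|² = ηᵗ A η = 2 Q(η)`.
-/

open Matrix MeasureTheory

noncomputable section

section LinearChangeOfVariables

variable {E F : Type*} [NormedAddCommGroup E] [NormedSpace ℝ E] [MeasurableSpace E]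
  [BorelSpace E] [FiniteDimensional ℝ E] (μ : Measure E) [μ.IsAddHaarMeasure]
  [NormedAddCommGroup F]

theorem map_linearEquiv_addHaar_eq_smul_addHaar (f : E ≃ₗ[ℝ] E) :
    Measure.map f μ = ENNReal.ofReal |(LinearMap.det (f : E →ₗ[ℝ] E))⁻¹| • μ :=
  Measure.map_linearMap_addHaar_eq_smul_addHaar μ (LinearEquiv.isUnit_det' f).ne_zero

theorem integrable_comp_linearEquiv_iff (f : E ≃ₗ[ℝ] E) {g : E → F} :
    Integrable (fun x => g (f x)) μ ↔ Integrable g μ := by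
  have hdet : LinearMap.det (f : E →ₗ[ℝ] E) ≠ 0 := (LinearEquiv.isUnit_det' f).ne_zero
  have h := integrable_map_equiv (μ := μ)
    f.toContinuousLinearEquiv.toHomeomorph.toMeasurableEquiv g
  rw [show ⇑f.toContinuousLinearEquiv.toHomeomorph.toMeasurableEquiv = f from rfl,
    map_linearEquiv_addHaar_eq_smul_addHaar,
    integrable_smul_measure (by simpa using hdet) ENNReal.ofReal_ne_top] at h
  exact h.symm

theorem integral_comp_linearEquiv [NormedSpace ℝ F] (f : E ≃ₗ[ℝ] E) (g : E → F) :
    ∫ x, g (f x) ∂μ = |(LinearMap.det (f : E →ₗ[ℝ] E))⁻¹| • ∫ x, g x ∂μ := by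
  have h := integral_map_equiv (μ := μ)
    f.toContinuousLinearEquiv.toHomeomorph.toMeasurableEquiv g
  rw [show ⇑f.toContinuousLinearEquiv.toHomeomorph.toMeasurableEquiv = f from rfl,
    map_linearEquiv_addHaar_eq_smul_addHaar, integral_smul_measure,
    ENNReal.toReal_ofReal (abs_nonneg _)] at h
  exact h.symm

end LinearChangeOfVariables

section SymmetricSquareRoot

variable {n : Type*} [Fintype n]

theorem Matrix.PosDef.exists_isSymm_mul_self_eq [DecidableEq n] {B : Matrix n n ℝ}
    (hB : B.PosDef) : ∃ N : Matrix n n ℝ, N.IsSymm ∧ N * N = B ∧ N.det = √B.det := by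
  open scoped MatrixOrder in
  refine ⟨CFC.sqrt B, ?_, CFC.sqrt_mul_sqrt_self B hB.posSemidef.nonneg, ?_⟩
  · simpa [IsHermitian, IsSymm] using (CFC.sqrt_nonneg B).posSemidef.isHermitian
  · rw [hB.posSemidef.det_sqrt, RCLike.sqrt_real]

theorem Matrix.IsSymm.mulVec_dotProduct {R : Type*} [CommSemiring R] {N : Matrix n n R}
    (hN : N.IsSymm) (ψ η : n → R) : N *ᵥ ψ ⬝ᵥ η = ψ ⬝ᵥ N *ᵥ η := by
  rw [dotProduct_comm, dotProduct_mulVec, ← mulVec_transpose, hN.eq, dotProduct_comm]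

theorem Matrix.IsSymm.mulVec_dotProduct_mul_self_inv_mulVec [DecidableEq n]
    {N : Matrix n n ℝ} (hN : N.IsSymm) (hdet : IsUnit N.det) (ψ : n → ℝ) :
    N *ᵥ ψ ⬝ᵥ (N * N)⁻¹ *ᵥ N *ᵥ ψ = ψ ⬝ᵥ ψ := by
  rw [hN.mulVec_dotProduct, mulVec_mulVec, mulVec_mulVec, Matrix.mul_inv_rev,
    Matrix.mul_assoc, Matrix.mul_assoc, nonsing_inv_mul _ hdet, Matrix.mul_one,
    mul_nonsing_inv _ hdet, one_mulVec]

end SymmetricSquareRoot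

section Gaussian

open Complex Real

variable {ι : Type*} [Fintype ι] {b : ℂ}

theorem neg_mul_dotProduct_self_sub_eq_sum (b : ℂ) (ψ v : ι → ℝ) :
    -b * ((ψ ⬝ᵥ ψ : ℝ) : ℂ) - 2 * π * I * ((ψ ⬝ᵥ v : ℝ) : ℂ) =
      -b * ∑ i, (ψ i : ℂ) ^ 2 + ∑ i, (-2 * π * I * v i) * ψ i := by
  simp only [dotProduct, ofReal_sum, ofReal_mul, Finset.mul_sum, sq]
  rw [sub_eq_add_neg, ← Finset.sum_neg_distrib]
  congr 1
  exact Finset.sum_congr rfl fun i _ => by ring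

theorem integrable_cexp_neg_mul_dotProduct_self_sub (hb : 0 < b.re) (v : ι → ℝ) :
    Integrable fun ψ : ι → ℝ =>
      cexp (-b * ((ψ ⬝ᵥ ψ : ℝ) : ℂ) - 2 * π * I * ((ψ ⬝ᵥ v : ℝ) : ℂ)) := by
  simp_rw [neg_mul_dotProduct_self_sub_eq_sum]
  exact GaussianFourier.integrable_cexp_neg_mul_sum_add hb _

theorem integral_cexp_neg_mul_dotProduct_self_sub (hb : 0 < b.re) (v : ι → ℝ) :
    ∫ ψ : ι → ℝ, cexp (-b * ((ψ ⬝ᵥ ψ : ℝ) : ℂ) - 2 * π * I * ((ψ ⬝ᵥ v : ℝ) : ℂ)) =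
      (π / b) ^ (Fintype.card ι / 2 : ℂ) * cexp (-π ^ 2 * ((v ⬝ᵥ v : ℝ) : ℂ) / b) := by
  simp_rw [neg_mul_dotProduct_self_sub_eq_sum,
    GaussianFourier.integral_cexp_neg_mul_sum_add hb]
  have hb0 : b ≠ 0 := fun h => by simp [h] at hb
  congr 2
  simp only [dotProduct, ofReal_sum, ofReal_mul, mul_pow, Finset.mul_sum, Finset.sum_div, I_sq]
  exact Finset.sum_congr rfl fun i _ => by field_simp; ring

variable [DecidableEq ι] {B : Matrix ι ι ℝ} {w : ℂ}

theorem fourier_cexp_neg_dotProduct_inv_mulVec_div (hB : B.PosDef) (hw : 0 < w.re)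
    (η : ι → ℝ) :
    Integrable (fun φ : ι → ℝ =>
        cexp (-π * ((φ ⬝ᵥ B⁻¹ *ᵥ φ : ℝ) : ℂ) / w - 2 * π * I * ((φ ⬝ᵥ η : ℝ) : ℂ))) ∧
      ∫ φ : ι → ℝ,
          cexp (-π * ((φ ⬝ᵥ B⁻¹ *ᵥ φ : ℝ) : ℂ) / w - 2 * π * I * ((φ ⬝ᵥ η : ℝ) : ℂ)) =
        √B.det * w ^ (Fintype.card ι / 2 : ℂ) * cexp (-π * ((η ⬝ᵥ B *ᵥ η : ℝ) : ℂ) * w) := by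
  obtain ⟨N, hNsymm, rfl, hNdet⟩ := hB.exists_isSymm_mul_self_eq
  have hdet_pos : 0 < N.det := hNdet ▸ Real.sqrt_pos.mpr hB.det_pos
  have hN_unit : IsUnit N.det := isUnit_iff_ne_zero.mpr hdet_pos.ne'
  let e := N.toLinearEquiv' (N.invertibleOfIsUnitDet hN_unit)
  have he_det : LinearMap.det (e : (ι → ℝ) →ₗ[ℝ] ι → ℝ) = N.det := LinearMap.det_toLin' N
  have hw0 : w ≠ 0 := fun h => by simp [h] at hw
  have hb : 0 < (π / w).re := by
    rw [div_re, ofReal_re, ofReal_im, zero_mul, zero_div, add_zero]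
    exact div_pos (mul_pos pi_pos hw) (normSq_pos.mpr hw0)
  have h_subst : ∀ ψ, cexp (-π * ((e ψ ⬝ᵥ (N * N)⁻¹ *ᵥ e ψ : ℝ) : ℂ) / w -
      2 * π * I * ((e ψ ⬝ᵥ η : ℝ) : ℂ)) =
      cexp (-(π / w) * ((ψ ⬝ᵥ ψ : ℝ) : ℂ) - 2 * π * I * ((ψ ⬝ᵥ N *ᵥ η : ℝ) : ℂ)) := by
    intro ψ
    change cexp (-π * ((N *ᵥ ψ ⬝ᵥ (N * N)⁻¹ *ᵥ N *ᵥ ψ : ℝ) : ℂ) / w -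
      2 * π * I * ((N *ᵥ ψ ⬝ᵥ η : ℝ) : ℂ)) = _
    rw [hNsymm.mulVec_dotProduct_mul_self_inv_mulVec hN_unit, hNsymm.mulVec_dotProduct]
    congr 1
    ring
  constructor
  · rw [← integrable_comp_linearEquiv_iff volume e]
    simp_rw [h_subst]
    exact integrable_cexp_neg_mul_dotProduct_self_sub hb _
  · have h := integral_comp_linearEquiv volume e fun φ =>
      cexp (-π * ((φ ⬝ᵥ (N * N)⁻¹ *ᵥ φ : ℝ) : ℂ) / w - 2 * π * I * ((φ ⬝ᵥ η : ℝ) : ℂ))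
    simp_rw [h_subst, integral_cexp_neg_mul_dotProduct_self_sub hb, he_det] at h
    have h_norm : N *ᵥ η ⬝ᵥ N *ᵥ η = η ⬝ᵥ (N * N) *ᵥ η := by
      rw [hNsymm.mulVec_dotProduct, mulVec_mulVec]
    have h_exponent : -π ^ 2 * ((η ⬝ᵥ (N * N) *ᵥ η : ℝ) : ℂ) / (π / w) =
        -π * ((η ⬝ᵥ (N * N) *ᵥ η : ℝ) : ℂ) * w := by
      field_simp [ofReal_ne_zero.mpr pi_ne_zero]
    rw [h_norm, h_exponent, div_div_cancel₀ (ofReal_ne_zero.mpr pi_ne_zero), abs_inv,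
      abs_of_pos hdet_pos, eq_inv_smul_iff₀ hdet_pos.ne'] at h
    rw [← h, ← hNdet, real_smul]
    ring

end Gaussian

theorem gaussian_fourier_transform_general
    (k : ℕ)
    (A : Matrix (Fin k) (Fin k) ℤ)
    (hApos : (A.map ((↑) : ℤ → ℝ)).PosDef)
    (Qstar : (Fin k → ℝ) → ℝ)
    (hQstar : ∀ x, Qstar x = (1 / 2) * (x ⬝ᵥ ((A.map ((↑) : ℤ → ℝ))⁻¹).mulVec x))
    (QR : (Fin k → ℝ) → ℝ)
    (hQR : ∀ x, QR x = (1 / 2) * (x ⬝ᵥ (A.map ((↑) : ℤ → ℝ)).mulVec x))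
    (y : ℝ) (hy : 0 < y) (θ : ℝ) (η : Fin k → ℝ) :
    Integrable (fun φ : Fin k → ℝ =>
      Complex.exp ((-2 : ℂ) * Real.pi * ((Qstar φ : ℝ) : ℂ) / ((y : ℂ) + Complex.I * (θ : ℝ))) *
        Complex.exp ((-2 : ℂ) * Real.pi * Complex.I * ((φ ⬝ᵥ η : ℝ) : ℂ))) volume ∧
    (∫ φ : Fin k → ℝ,
        Complex.exp ((-2 : ℂ) * Real.pi * ((Qstar φ : ℝ) : ℂ) /
            ((y : ℂ) + Complex.I * (θ : ℝ))) *
          Complex.exp ((-2 : ℂ) * Real.pi * Complex.I * ((φ ⬝ᵥ η : ℝ) : ℂ)))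
      = (Real.sqrt (A.det : ℝ) : ℂ) * ((y : ℂ) + Complex.I * (θ : ℝ)) ^ ((k : ℂ) / 2) *
          Complex.exp ((-2 : ℂ) * Real.pi * ((QR η : ℝ) : ℂ) *
            ((y : ℂ) + Complex.I * (θ : ℝ))) := by
  set w : ℂ := (y : ℂ) + Complex.I * (θ : ℝ)
  have hw : 0 < w.re := by simpa [w] using hy
  have h_integrand : ∀ φ : Fin k → ℝ,
      Complex.exp (-2 * Real.pi * ((Qstar φ : ℝ) : ℂ) / w) *
          Complex.exp (-2 * Real.pi * Complex.I * ((φ ⬝ᵥ η : ℝ) : ℂ)) =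
        Complex.exp (-Real.pi * ((φ ⬝ᵥ (A.map ((↑) : ℤ → ℝ))⁻¹ *ᵥ φ : ℝ) : ℂ) / w -
          2 * Real.pi * Complex.I * ((φ ⬝ᵥ η : ℝ) : ℂ)) := by
    intro φ
    rw [hQstar, ← Complex.exp_add]
    congr 1
    push_cast
    ring
  obtain ⟨h_int, h_val⟩ := fourier_cexp_neg_dotProduct_inv_mulVec_div hApos hw η
  simp_rw [h_integrand]
  refine ⟨h_int, ?_⟩
  rw [h_val, hQR, Int.cast_det, Fintype.card_fin]
  congr 2
  push_cast
  ring

/-- the Fourier transform of the complex Gaussian attached to the adjoint form: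
`∫_{ℝ^k} e^{-2π Q*(φ)/(y+iθ)} e^{-2πi φ·η} dφ = (det A)^{1/2} (y+iθ)^{k/2} e^{-2π Q(η)(y+iθ)}`. -/
theorem gaussian_fourier_transform
    (k : ℕ) (hk : 1 ≤ k)
    (A : Matrix (Fin k) (Fin k) ℤ)
    (hAsymm : A.IsSymm)
    (hApos : (A.map ((↑) : ℤ → ℝ)).PosDef)
    (hAeven : ∀ i, 2 ∣ A i i)
    (Q : (Fin k → ℤ) → ℤ)
    (hQ : ∀ x, 2 * Q x = x ⬝ᵥ A.mulVec x)
    (Qstar : (Fin k → ℝ) → ℝ)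
    (hQstar : ∀ x, Qstar x = (1 / 2) * (x ⬝ᵥ ((A.map ((↑) : ℤ → ℝ))⁻¹).mulVec x))
    (QR : (Fin k → ℝ) → ℝ)
    (hQR : ∀ x, QR x = (1 / 2) * (x ⬝ᵥ (A.map ((↑) : ℤ → ℝ)).mulVec x))
    (y : ℝ) (hy : 0 < y) (θ : ℝ) (η : Fin k → ℝ) :
    Integrable (fun φ : Fin k → ℝ =>
      Complex.exp ((-2 : ℂ) * Real.pi * ((Qstar φ : ℝ) : ℂ) / ((y : ℂ) + Complex.I * (θ : ℝ))) *
        Complex.exp ((-2 : ℂ) * Real.pi * Complex.I * ((φ ⬝ᵥ η : ℝ) : ℂ))) volume ∧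
    (∫ φ : Fin k → ℝ,
        Complex.exp ((-2 : ℂ) * Real.pi * ((Qstar φ : ℝ) : ℂ) /
            ((y : ℂ) + Complex.I * (θ : ℝ))) *
          Complex.exp ((-2 : ℂ) * Real.pi * Complex.I * ((φ ⬝ᵥ η : ℝ) : ℂ)))
      = (Real.sqrt (A.det : ℝ) : ℂ) * ((y : ℂ) + Complex.I * (θ : ℝ)) ^ ((k : ℂ) / 2) *
          Complex.exp ((-2 : ℂ) * Real.pi * ((QR η : ℝ) : ℂ) *
            ((y : ℂ) + Complex.I * (θ : ℝ))) :=
  gaussian_fourier_transform_general k A hApos Qstar hQstar QR hQR y hy θ η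
end
end
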